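/- Two-agent bounded Löb cooperation (DUPOC vs CIMCIC): in the abstract bounded provability structure satisfying PBLT, let p(k) be the conjunction 'DUPOC(k) cooperates with CIMCIC(k) and CIMCIC(k) cooperates with DUPOC(k)'. Assume provably: Box_{⌊k/2⌋}(p(k)) implies both (a) Box_k of CIMCIC's conditional cooperation criterion, and (b) Box_k of DUPOC's cooperation criterion, each of which triggers the respective agent's cooperation. Then for all sufficiently large k, both agents cooperate. -/
import Mathlib


/-- Actions in the open-source Prisoner's Dilemma. -/
inductive Act : Type
  | C : Act  -- cooperate
  | D : Act  -- defect
deriving DecidableEq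

/-- **Two-agent bounded Löb cooperation (DUPOC vs CIMCIC)**: with `p k` the
conjunction "DUPOC(k) cooperates with CIMCIC(k) and CIMCIC(k) cooperates with
DUPOC(k)", assume a `≤ ⌊k/2⌋`-length proof of `p k` extends (for `k > 2c`) to
`≤ k`-length proofs of (a) CIMCIC's conditional cooperation criterion and
(b) DUPOC's cooperation criterion, each of which triggers the respective
agent's cooperation.  Then, by the Parametric Bounded Löb principle, both
agents cooperate for all sufficiently large `k`. -/
theorem dupoc_cimcic_cooperation {Agent : Type}
    (plays : Agent → Agent → Act)
    (Box : ℕ → Prop → Prop)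
    -- Parametric Bounded Löb principle
    (pblt : ∀ (p : ℕ → Prop) (f : ℕ → ℕ) (k₁ : ℕ),
      Monotone f → Computable f →
      (∃ c' : ℝ, 0 < c' ∧ ∃ khat : ℕ, ∀ k > khat, c' * Real.log k < (f k : ℝ)) →
      (∀ k > k₁, Box (f k) (p k) → p k) →
      ∃ k₂ : ℕ, ∀ k > k₂, p k)
    (dupoc cimcic : ℕ → Agent)
    -- DUPOC(k) cooperates iff it verifies DUPOC's cooperation criterion:
    -- "the opponent cooperates"
    (hdupoc : ∀ k : ℕ,
      plays (dupoc k) (cimcic k) = Act.C ↔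
        Box k (plays (cimcic k) (dupoc k) = Act.C))
    -- CIMCIC(k) cooperates iff it verifies its conditional criterion:
    -- "my cooperation implies the opponent's cooperation"
    (hcimcic : ∀ k : ℕ,
      plays (cimcic k) (dupoc k) = Act.C ↔
        Box k (plays (cimcic k) (dupoc k) = Act.C →
               plays (dupoc k) (cimcic k) = Act.C))
    -- proofs of `p k` of length ≤ ⌊k/2⌋ extend, for k beyond a constant 2c,
    -- to ≤ k-length proofs of each agent's cooperation criterion
    (c : ℕ)
    (hextA : ∀ k > 2 * c,
      Box (k / 2) (plays (dupoc k) (cimcic k) = Act.C ∧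
                   plays (cimcic k) (dupoc k) = Act.C) →
      Box k (plays (cimcic k) (dupoc k) = Act.C →
             plays (dupoc k) (cimcic k) = Act.C))
    (hextB : ∀ k > 2 * c,
      Box (k / 2) (plays (dupoc k) (cimcic k) = Act.C ∧
                   plays (cimcic k) (dupoc k) = Act.C) →
      Box k (plays (cimcic k) (dupoc k) = Act.C)) :
    ∃ k₂ : ℕ, ∀ k > k₂,
      plays (dupoc k) (cimcic k) = Act.C ∧
      plays (cimcic k) (dupoc k) = Act.C := by

  refine pblt (fun k => plays (dupoc k) (cimcic k) = Act.C ∧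
      plays (cimcic k) (dupoc k) = Act.C) (fun k => k / 2) (2 * c)
    (fun a b hab => Nat.div_le_div_right hab)
    ((Primrec.nat_div.comp .id (.const 2)).to_comp)
    ⟨1/4, by norm_num, 1, ?_⟩ ?_
  · intro k hk
    have hk1 : (1:ℝ) ≤ k := by exact_mod_cast Nat.one_le_iff_ne_zero.mpr (by omega)
    have hlog : Real.log k < k := by
      have := Real.log_le_sub_one_of_pos (x := k) (by linarith)
      linarith
    have hfloor : (k:ℝ) / 4 ≤ ((k / 2 : ℕ) : ℝ) := by
      have : k ≤ 4 * (k / 2) := by omega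
      have := (Nat.cast_le (α := ℝ)).mpr this
      push_cast at this
      linarith
    calc (1/4 : ℝ) * Real.log k < (1/4) * k := by linarith
      _ ≤ ((k / 2 : ℕ) : ℝ) := by linarith
  · intro k hk hbox
    exact ⟨(hdupoc k).mpr (hextB k hk hbox), (hcimcic k).mpr (hextA k hk hbox)⟩
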